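/- arXiv:2604.21894 — 2 statements merged into one kernel-verified Lean document; each statement's English description precedes it below -/
import Mathlib

section
/- Let P be a partial order. The domination relation on multisets over P is antisymmetric: if s ≼ t and t ≼ s, then s = t as multisets. -/
/-- A multiset `s` over a preorder is dominated by `t` if there is a sub-multiset
`t'` of `t` matched bijectively with `s` so that each element of `s` is `≤` its match. -/
def MultisetDominated {P : Type*} [Preorder P] (s t : Multiset P) : Prop :=
  ∃ t' : Multiset P, t' ≤ t ∧ Multiset.Rel (· ≤ ·) s t'

open Multiset in
lemma countP_le_of_rel {P : Type*} [Preorder P] {r : P → P → Prop}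
    {s t : Multiset P} (h : Multiset.Rel r s t)
    (p : P → Prop) [DecidablePred p] (hp : ∀ x y, p x → r x y → p y) :
    countP p s ≤ countP p t := by
  induction h with
  | zero => simp
  | @cons x y as bs hxy hrel ih =>
    rw [countP_cons, countP_cons]
    by_cases hx : p x
    · have := hp _ _ hx hxy
      simp [hx, this]; omega
    · simp [hx]; omega

open Multiset in
lemma countP_strict_add_count {P : Type*} [PartialOrder P] [DecidableEq P]
    [DecidableRel ((· ≤ ·) : P → P → Prop)]
    (a : P) (s : Multiset P) :
    countP (fun x => a ≤ x ∧ x ≠ a) s + count a s = countP (a ≤ ·) s := by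
  induction s using Multiset.induction with
  | empty => simp
  | cons x s ih =>
    simp only [ne_eq] at ih
    rw [countP_cons, countP_cons, count_cons]
    by_cases hxa : x = a
    · subst hxa
      simp; omega
    · have hax : ¬ a = x := fun h => hxa h.symm
      by_cases h2 : a ≤ x
      · simp [h2, hxa, hax]; omega
      · simp [h2, hxa, hax]; omega

/-- Over a partial order, the fleet-domination relation on multisets is antisymmetric. -/
theorem multisetDominated_antisymm {P : Type*} [PartialOrder P]
    (s t : Multiset P)
    (hst : MultisetDominated s t) (hts : MultisetDominated t s) :
    s = t := by
  classical
  obtain ⟨t', ht't, hst'⟩ := hst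
  obtain ⟨s', hs's, hts'⟩ := hts
  have key : ∀ (p : P → Prop) [DecidablePred p],
      (∀ x y, p x → x ≤ y → p y) → Multiset.countP p s = Multiset.countP p t := by
    intro p _ hp
    have h1 : Multiset.countP p s ≤ Multiset.countP p t' :=
      countP_le_of_rel hst' p hp
    have h2 : Multiset.countP p t' ≤ Multiset.countP p t :=
      Multiset.countP_le_of_le p ht't
    have h3 : Multiset.countP p t ≤ Multiset.countP p s' :=
      countP_le_of_rel hts' p hp
    have h4 : Multiset.countP p s' ≤ Multiset.countP p s :=
      Multiset.countP_le_of_le p hs's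
    omega
  ext a
  have hle := key (a ≤ ·) (fun x y hx hxy => le_trans hx hxy)
  have hlt := key (fun x => a ≤ x ∧ x ≠ a) (fun x y hx hxy =>
    ⟨le_trans hx.1 hxy, fun e => hx.2 (le_antisymm (e ▸ hxy) hx.1)⟩)
  have e1 := countP_strict_add_count a s
  have e2 := countP_strict_add_count a t
  omega
end

section
/- Let M be a type. The relation on multisets of lists over M defined by s ≼ t if there exists a sub-multiset t' of t with s related to t' by the pointwise sublist relation (each list of s matched to a distinct list of t of which it is an order-preserving sublist) is a partial order on multisets of lists: it is reflexive, transitive, and antisymmetric. -/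
/-- A multiset of waypoint sequences `s` is dominated by `t` if there is a
sub-multiset `t'` of `t` matched bijectively with `s` so that each list of `s`
is an order-preserving sublist of its match. -/
def WaypointDominated {M : Type*} (s t : Multiset (List M)) : Prop :=
  ∃ t' : Multiset (List M), t' ≤ t ∧ Multiset.Rel List.Sublist s t'

lemma rel_restrict {α : Type*} {r : α → α → Prop} {t u t' : Multiset α}
    (h : Multiset.Rel r t u) (ht : t' ≤ t) : ∃ u' ≤ u, Multiset.Rel r t' u' := by
  obtain ⟨d, rfl⟩ := Multiset.le_iff_exists_add.mp ht
  rw [Multiset.rel_add_left] at h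
  obtain ⟨bs, bt, h1, -, rfl⟩ := h
  exact ⟨bs, Multiset.le_add_right _ _, h1⟩

lemma sum_mono_aux {s t : Multiset ℕ} (h : s ≤ t) : s.sum ≤ t.sum := by
  obtain ⟨d, rfl⟩ := Multiset.le_iff_exists_add.mp h
  simp

lemma rel_sum_le {M : Type*} {s t : Multiset (List M)}
    (h : Multiset.Rel List.Sublist s t) :
    (s.map List.length).sum ≤ (t.map List.length).sum := by
  induction h with
  | zero => simp
  | cons hab _ ih =>
    simp only [Multiset.map_cons, Multiset.sum_cons]
    exact add_le_add hab.length_le ih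

lemma rel_eq_of_sum {M : Type*} {s t : Multiset (List M)}
    (h : Multiset.Rel List.Sublist s t)
    (hsum : (s.map List.length).sum = (t.map List.length).sum) : s = t := by
  induction h with
  | zero => rfl
  | @cons a b s' t' hab hr ih =>
    simp only [Multiset.map_cons, Multiset.sum_cons] at hsum
    have h1 := hab.length_le
    have h2 := rel_sum_le hr
    have : a.length = b.length := by omega
    rw [hab.eq_of_length this, ih (by omega)]

/-- The domination relation on waypoint collections (multisets of lists, ordered
by injective matching via the sublist relation) is a partial order: reflexive,
transitive, and antisymmetric. -/
theorem waypointDominated_partialOrder {M : Type*} :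
    (∀ s : Multiset (List M), WaypointDominated s s) ∧
    (∀ s t u : Multiset (List M),
      WaypointDominated s t → WaypointDominated t u → WaypointDominated s u) ∧
    (∀ s t : Multiset (List M),
      WaypointDominated s t → WaypointDominated t s → s = t) := by
  refine ⟨fun s => ⟨s, le_rfl, Multiset.rel_refl_of_refl_on fun x _ => List.Sublist.refl x⟩,
    ?_, ?_⟩
  · haveI : IsTrans (List M) List.Sublist := ⟨fun _ _ _ => List.Sublist.trans⟩
    rintro s t u ⟨t', ht', hst⟩ ⟨u', hu', htu⟩
    obtain ⟨u'', hu'', hrel⟩ := rel_restrict htu ht'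
    exact ⟨u'', le_trans hu'' hu',
      Multiset.Rel.trans _ hst hrel⟩
  · rintro s t ⟨t', ht', hst⟩ ⟨s', hs', hts⟩
    have h1 := rel_sum_le hst
    have h2 := rel_sum_le hts
    have hle1 : (t'.map List.length).sum ≤ (t.map List.length).sum :=
      sum_mono_aux (Multiset.map_le_map ht')
    have hle2 : (s'.map List.length).sum ≤ (s.map List.length).sum :=
      sum_mono_aux (Multiset.map_le_map hs')
    have heq : (s.map List.length).sum = (t'.map List.length).sum := by omega
    have hst' : s = t' := rel_eq_of_sum hst heq
    subst hst'
    have hc1 : Multiset.card t = Multiset.card s' := Multiset.card_eq_card_of_rel hts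
    have hc2 : Multiset.card s' ≤ Multiset.card s := Multiset.card_le_card hs'
    exact Multiset.eq_of_le_of_card_le ht' (by omega)
end
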